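/- Let θ ∈ (0, 1/2], let n ≥ 2 be an integer, and let u ∈ S_{T[θ,S_n]}. Then min( ‖u + y‖ , ‖u − y‖ ) ≤ 1 for all y ∈ S_{T[θ,S_n]} if and only if u = e₁ or u = −e₁. -/

import Mathlib

/-!
Write `x = x(1) e₁ + w` with `w = x.erase 1`. A member of `S_n` containing `1` is `{1}`, so an
admissible family meeting `1` is a single set and the first coordinate splits off:
`‖x‖ = max(|x(1)|, ‖w‖)`. Hence for `y = a e₁ + w` we get `‖e₁ ± y‖ = max(|1 ± a|, ‖w‖)`, and the
sign with `±a ≤ 0` makes this at most `max(1, ‖y‖)`.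

Conversely, let `u` be at distance `δ > 0` from `ℝ e₁` and approximate it by `v ∈ c₀₀`. Pick
`k ≥ 1/θ`, `c = 1/(kθ)`, and put `y = c (e_{M+3} + ⋯ + e_{M+k+2})` beyond the support of `v`.
The sets `[2, M+2], {M+3}, …, {M+k+2}` are `S₂`-admissible as soon as `k ≤ M + 3`, so
`‖v ± y‖ ≥ θ (‖w‖ + k c) = 1 + θ ‖w‖` with `‖w‖` close to `δ`, while `‖y‖ = 1`; thus
`‖u ± y‖ > 1`.
-/
open scoped BigOperators

noncomputable section

/-- Projection of a finitely supported vector onto the coordinates in `E`. -/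
def tsProj (E : Finset ℕ+) (x : ℕ+ →₀ ℝ) : ℕ+ →₀ ℝ :=
  x.filter fun i => i ∈ E

/-- The Schreier families `S_n` on the positive integers:
`S₁` consists of the sets `F` with `|F| ≤ min F` (together with `∅`), and `S_{n+1}`
consists of unions `F₁ ∪ ⋯ ∪ F_d` of nonempty members `F₁ < ⋯ < F_d` of `S_n`
with `d ≤ min F₁` (together with `∅`). -/
def Schreier : ℕ → Set (Finset ℕ+)
  | 0 => {F | F.card ≤ 1}
  | 1 => {F | ∀ a ∈ F, F.card ≤ (a : ℕ)}
  | n + 2 =>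
      {F | F = ∅ ∨
        ∃ (d : ℕ) (G : Fin d → Finset ℕ+),
          0 < d ∧ (∀ i, G i ∈ Schreier (n + 1)) ∧ (∀ i, (G i).Nonempty) ∧
          (∀ i j : Fin d, i < j → ∀ a ∈ G i, ∀ b ∈ G j, a < b) ∧
          (∀ i, ∀ a ∈ G i, d ≤ (a : ℕ)) ∧ F = Finset.univ.biUnion G}

/-- A tuple of nonempty finite sets `E 0 < E 1 < ⋯` whose set of minima belongs to `S`. -/
def TsAdmissible (S : Set (Finset ℕ+)) {d : ℕ} (E : Fin d → Finset ℕ+) : Prop :=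
  (∀ i, (E i).Nonempty) ∧
  (∀ i j : Fin d, i < j → ∀ a ∈ E i, ∀ b ∈ E j, a < b) ∧
  ∃ μ : Fin d → ℕ+, (∀ i, IsLeast (↑(E i) : Set ℕ+) (μ i)) ∧
    Finset.univ.image μ ∈ S

/-- The iterated norms `‖·‖_m` in the construction of the Tsirelson norm:
`‖x‖₀` is the supremum norm and
`‖x‖_{m+1} = max(‖x‖_m, sup{θ ∑ᵢ ‖Eᵢ x‖_m : E₁ < ⋯ < E_d, {min Eᵢ} ∈ S})`. -/
def tnormAux (θ : ℝ) (S : Set (Finset ℕ+)) : ℕ → (ℕ+ →₀ ℝ) → ℝ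
  | 0, x => ⨆ i, |x i|
  | m + 1, x =>
      max (tnormAux θ S m x)
        (sSup {r : ℝ | ∃ (d : ℕ) (E : Fin d → Finset ℕ+), TsAdmissible S E ∧
          r = θ * ∑ i, tnormAux θ S m (tsProj (E i) x)})

/-- The Tsirelson norm `‖x‖_{θ,S} = sup_m ‖x‖_m` on `c₀₀`. -/
def tnorm (θ : ℝ) (S : Set (Finset ℕ+)) (x : ℕ+ →₀ ℝ) : ℝ :=
  ⨆ m : ℕ, tnormAux θ S m x

/-- `X`, together with the sequence `e` of unit vectors, is (a realization of) the
Tsirelson space `T[θ, S_n]`: a Banach space containing `c₀₀` isometrically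
(w.r.t. the Tsirelson norm) as a dense subspace, in which `(e i)` is a
(1-unconditional) basis, i.e. every `x` has a unique expansion `x = ∑ᵢ aᵢ eᵢ`. -/
structure IsTsirelsonSpace (θ : ℝ) (n : ℕ) (X : Type*) [NormedAddCommGroup X]
    [NormedSpace ℝ X] (e : ℕ+ → X) : Prop where
  complete : CompleteSpace X
  norm_embed : ∀ a : ℕ+ →₀ ℝ, ‖a.sum fun i c => c • e i‖ = tnorm θ (Schreier n) a
  dense_embed : DenseRange fun a : ℕ+ →₀ ℝ => a.sum fun i c => c • e i
  expansion : ∀ x : X, ∃! a : ℕ+ → ℝ, HasSum (fun i => a i • e i) x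

def l1Norm (x : ℕ+ →₀ ℝ) : ℝ := ∑ i ∈ x.support, |x i|

lemma l1Norm_nonneg (x : ℕ+ →₀ ℝ) : 0 ≤ l1Norm x :=
  Finset.sum_nonneg fun _ _ => abs_nonneg _

lemma abs_le_l1Norm (x : ℕ+ →₀ ℝ) (i : ℕ+) : |x i| ≤ l1Norm x := by
  by_cases h : i ∈ x.support
  · exact Finset.single_le_sum (fun j _ => abs_nonneg (x j)) h
  · simp [Finsupp.notMem_support_iff.mp h, l1Norm_nonneg]

lemma l1Norm_le_card_mul {x : ℕ+ →₀ ℝ} {c : ℝ} (h : ∀ i, |x i| ≤ c) :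
    l1Norm x ≤ x.support.card * c := by
  simpa [l1Norm] using Finset.sum_le_card_nsmul x.support _ c fun i _ => h i

lemma tsProj_apply (E : Finset ℕ+) (x : ℕ+ →₀ ℝ) (a : ℕ+) :
    tsProj E x a = if a ∈ E then x a else 0 :=
  Finsupp.filter_apply _ _ _

lemma sum_l1Norm_tsProj_le {d : ℕ} {E : Fin d → Finset ℕ+}
    (hE : ∀ i j : Fin d, i < j → ∀ a ∈ E i, ∀ b ∈ E j, a < b) (x : ℕ+ →₀ ℝ) :
    ∑ i, l1Norm (tsProj (E i) x) ≤ l1Norm x := by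
  have hdisj : ((Finset.univ : Finset (Fin d)) : Set (Fin d)).PairwiseDisjoint
      fun i => x.support.filter (· ∈ E i) := by
    intro i _ j _ hij
    refine Finset.disjoint_left.mpr fun a hai haj => ?_
    rw [Finset.mem_filter] at hai haj
    rcases lt_or_gt_of_ne hij with h | h
    · exact lt_irrefl a (hE i j h a hai.2 a haj.2)
    · exact lt_irrefl a (hE j i h a haj.2 a hai.2)
  calc ∑ i, l1Norm (tsProj (E i) x)
      = ∑ a ∈ Finset.univ.biUnion fun i => x.support.filter (· ∈ E i), |x a| := by
        rw [Finset.sum_biUnion hdisj]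
        refine Finset.sum_congr rfl fun i _ => ?_
        rw [l1Norm, tsProj, Finsupp.support_filter]
        exact Finset.sum_congr rfl fun a ha => by
          rw [Finsupp.filter_apply, if_pos (Finset.mem_filter.mp ha).2]
    _ ≤ l1Norm x :=
        Finset.sum_le_sum_of_subset_of_nonneg
          (Finset.biUnion_subset.mpr fun _ _ => Finset.filter_subset _ _)
          fun _ _ _ => abs_nonneg _

lemma tsProj_add (E : Finset ℕ+) (x y : ℕ+ →₀ ℝ) :
    tsProj E (x + y) = tsProj E x + tsProj E y :=
  Finsupp.filter_add

lemma tsProj_sub (E : Finset ℕ+) (x y : ℕ+ →₀ ℝ) :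
    tsProj E (x - y) = tsProj E x - tsProj E y :=
  Finsupp.filter_sub _ _ _

lemma tsProj_eq_zero {E : Finset ℕ+} {x : ℕ+ →₀ ℝ} (h : ∀ a ∈ E, x a = 0) : tsProj E x = 0 := by
  ext a
  rw [tsProj_apply]
  split_ifs with ha
  exacts [h a ha, rfl]

lemma tsProj_Icc_two_eq_erase_one {x : ℕ+ →₀ ℝ} {N : ℕ+} (hx : ∀ a ∈ x.support, a ≤ N) :
    tsProj (Finset.Icc 2 N) x = x.erase 1 := by
  have h2 : ∀ a : ℕ+, 2 ≤ a ↔ a ≠ 1 := fun a => by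
    rw [← PNat.coe_le_coe, Ne, ← PNat.coe_eq_one_iff, PNat.val_ofNat]
    have := a.pos
    omega
  ext a
  simp only [tsProj_apply, Finsupp.erase_apply, Finset.mem_Icc, h2]
  split_ifs with ha h1 h1
  · exact absurd h1 ha.1
  · rfl
  · rfl
  · exact (Finsupp.notMem_support_iff.mp fun hxa => ha ⟨h1, hx a hxa⟩).symm

lemma tsProj_erase_one_of_notMem {E : Finset ℕ+} (h : (1 : ℕ+) ∉ E) (x : ℕ+ →₀ ℝ) :
    tsProj E (x.erase 1) = tsProj E x := by
  ext a
  rw [tsProj_apply, tsProj_apply, Finsupp.erase_apply]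
  split_ifs with h1 ha <;> simp_all

lemma tsProj_erase_one (E : Finset ℕ+) (x : ℕ+ →₀ ℝ) :
    tsProj E (x.erase 1) = (tsProj E x).erase 1 := by
  ext a
  simp only [tsProj_apply, Finsupp.erase_apply]
  split_ifs <;> rfl

lemma tsProj_erase_one_eq_tsProj_erase (E : Finset ℕ+) (x : ℕ+ →₀ ℝ) :
    tsProj E (x.erase 1) = tsProj (E.erase 1) x := by
  ext a
  simp only [tsProj_apply, Finsupp.erase_apply, Finset.mem_erase]
  split_ifs <;> simp_all

section TsirelsonNorm

variable {θ : ℝ} {S : Set (Finset ℕ+)}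

lemma abs_le_tnormAux_zero (x : ℕ+ →₀ ℝ) (i : ℕ+) : |x i| ≤ tnormAux θ S 0 x :=
  le_ciSup (f := fun i => |x i|) ⟨l1Norm x, by rintro _ ⟨j, rfl⟩; exact abs_le_l1Norm x j⟩ i

lemma tnormAux_zero_le {x : ℕ+ →₀ ℝ} {c : ℝ} (h : ∀ i, |x i| ≤ c) : tnormAux θ S 0 x ≤ c :=
  ciSup_le h

lemma tnormAux_nonneg (m : ℕ) (x : ℕ+ →₀ ℝ) : 0 ≤ tnormAux θ S m x := by
  induction m with
  | zero => exact (abs_nonneg _).trans (abs_le_tnormAux_zero x 1)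
  | succ m ih => exact le_max_of_le_left ih

lemma tnormAux_mono (x : ℕ+ →₀ ℝ) : Monotone fun m => tnormAux θ S m x :=
  monotone_nat_of_le_succ fun _ => le_max_left _ _

lemma tnormAux_succ_le {m : ℕ} {x : ℕ+ →₀ ℝ} {c : ℝ} (hm : tnormAux θ S m x ≤ c) (hc : 0 ≤ c)
    (h : ∀ (d : ℕ) (E : Fin d → Finset ℕ+), TsAdmissible S E →
      θ * ∑ i, tnormAux θ S m (tsProj (E i) x) ≤ c) :
    tnormAux θ S (m + 1) x ≤ c :=
  max_le hm (Real.sSup_le (by rintro _ ⟨d, E, hE, rfl⟩; exact h d E hE) hc)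

lemma mul_sum_tnormAux_le_mul_l1Norm (hθ0 : 0 ≤ θ) {m : ℕ}
    (hm : ∀ y, tnormAux θ S m y ≤ l1Norm y) {d : ℕ} {E : Fin d → Finset ℕ+}
    (hE : TsAdmissible S E) (x : ℕ+ →₀ ℝ) :
    θ * ∑ i, tnormAux θ S m (tsProj (E i) x) ≤ θ * l1Norm x :=
  mul_le_mul_of_nonneg_left
    ((Finset.sum_le_sum fun _ _ => hm _).trans (sum_l1Norm_tsProj_le hE.2.1 x)) hθ0

lemma tnormAux_le_max_l1Norm (hθ0 : 0 ≤ θ) (hθ1 : θ ≤ 1) (m : ℕ) (x : ℕ+ →₀ ℝ) :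
    tnormAux θ S m x ≤ max (tnormAux θ S 0 x) (θ * l1Norm x) := by
  induction m generalizing x with
  | zero => exact le_max_left _ _
  | succ m ih =>
    have hl1 : ∀ y, tnormAux θ S m y ≤ l1Norm y := fun y => (ih y).trans <|
      max_le (tnormAux_zero_le (abs_le_l1Norm y)) (mul_le_of_le_one_left (l1Norm_nonneg y) hθ1)
    exact tnormAux_succ_le (ih x) (le_max_of_le_left (tnormAux_nonneg 0 x)) fun d E hE =>
      le_max_of_le_right (mul_sum_tnormAux_le_mul_l1Norm hθ0 hl1 hE x)

lemma tnormAux_le_l1Norm (hθ0 : 0 ≤ θ) (hθ1 : θ ≤ 1) (m : ℕ) (x : ℕ+ →₀ ℝ) :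
    tnormAux θ S m x ≤ l1Norm x :=
  (tnormAux_le_max_l1Norm hθ0 hθ1 m x).trans <|
    max_le (tnormAux_zero_le (abs_le_l1Norm x)) (mul_le_of_le_one_left (l1Norm_nonneg x) hθ1)

lemma le_tnormAux_succ (hθ0 : 0 ≤ θ) (hθ1 : θ ≤ 1) {d : ℕ} {E : Fin d → Finset ℕ+}
    (hE : TsAdmissible S E) (m : ℕ) (x : ℕ+ →₀ ℝ) :
    θ * ∑ i, tnormAux θ S m (tsProj (E i) x) ≤ tnormAux θ S (m + 1) x := by
  refine le_max_of_le_right (le_csSup ⟨l1Norm x, ?_⟩ ⟨d, E, hE, rfl⟩)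
  rintro _ ⟨d', E', hE', rfl⟩
  exact (mul_sum_tnormAux_le_mul_l1Norm hθ0 (tnormAux_le_l1Norm hθ0 hθ1 m) hE' x).trans
    (mul_le_of_le_one_left (l1Norm_nonneg x) hθ1)

lemma bddAbove_range_tnormAux (hθ0 : 0 ≤ θ) (hθ1 : θ ≤ 1) (x : ℕ+ →₀ ℝ) :
    BddAbove (Set.range fun m => tnormAux θ S m x) :=
  ⟨l1Norm x, by rintro _ ⟨m, rfl⟩; exact tnormAux_le_l1Norm hθ0 hθ1 m x⟩

lemma tnormAux_le_tnorm (hθ0 : 0 ≤ θ) (hθ1 : θ ≤ 1) (m : ℕ) (x : ℕ+ →₀ ℝ) :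
    tnormAux θ S m x ≤ tnorm θ S x :=
  le_ciSup (bddAbove_range_tnormAux hθ0 hθ1 x) m

lemma tnorm_le {x : ℕ+ →₀ ℝ} {c : ℝ} (h : ∀ m, tnormAux θ S m x ≤ c) : tnorm θ S x ≤ c :=
  ciSup_le h

lemma tendsto_tnormAux (hθ0 : 0 ≤ θ) (hθ1 : θ ≤ 1) (x : ℕ+ →₀ ℝ) :
    Filter.Tendsto (fun m => tnormAux θ S m x) Filter.atTop (nhds (tnorm θ S x)) :=
  tendsto_atTop_ciSup (tnormAux_mono x) (bddAbove_range_tnormAux hθ0 hθ1 x)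

lemma tnorm_nonneg (hθ0 : 0 ≤ θ) (hθ1 : θ ≤ 1) (x : ℕ+ →₀ ℝ) : 0 ≤ tnorm θ S x :=
  (tnormAux_nonneg 0 x).trans (tnormAux_le_tnorm hθ0 hθ1 0 x)

lemma abs_le_tnorm (hθ0 : 0 ≤ θ) (hθ1 : θ ≤ 1) (x : ℕ+ →₀ ℝ) (i : ℕ+) :
    |x i| ≤ tnorm θ S x :=
  (abs_le_tnormAux_zero x i).trans (tnormAux_le_tnorm hθ0 hθ1 0 x)

lemma tnorm_le_max_l1Norm (hθ0 : 0 ≤ θ) (hθ1 : θ ≤ 1) (x : ℕ+ →₀ ℝ) :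
    tnorm θ S x ≤ max (tnormAux θ S 0 x) (θ * l1Norm x) :=
  tnorm_le (tnormAux_le_max_l1Norm hθ0 hθ1 · x)

lemma tnorm_indicator_const_le (hθ0 : 0 ≤ θ) (hθ1 : θ ≤ 1) {F : Finset ℕ+} {c : ℝ}
    (hc : 0 ≤ c) : tnorm θ S (Finsupp.indicator F fun _ _ => c) ≤ max c (θ * (F.card * c)) := by
  have habs : ∀ a, |Finsupp.indicator F (fun _ _ => c) a| ≤ c := fun a => by
    rw [Finsupp.indicator_apply]
    split_ifs <;> simp [abs_of_nonneg hc, hc]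
  refine (tnorm_le_max_l1Norm hθ0 hθ1 _).trans (max_le_max (tnormAux_zero_le habs) ?_)
  refine mul_le_mul_of_nonneg_left ((l1Norm_le_card_mul habs).trans ?_) hθ0
  gcongr
  exact Finsupp.support_indicator_subset (s := F) (f := fun _ _ => c)

lemma tnorm_single_one (hθ0 : 0 ≤ θ) (hθ1 : θ ≤ 1) : tnorm θ S (Finsupp.single 1 1) = 1 := by
  refine le_antisymm ((tnorm_le_max_l1Norm hθ0 hθ1 _).trans (max_le ?_ ?_)) ?_
  · exact tnormAux_zero_le fun i => by
      rw [Finsupp.single_apply]; split_ifs <;> norm_num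
  · simpa [l1Norm] using hθ1
  · simpa using abs_le_tnorm (S := S) hθ0 hθ1 (Finsupp.single 1 1) 1

/-- The implicit equation of the Tsirelson norm, in the direction that survives the limit. -/
lemma le_tnorm_of_tsAdmissible (hθ0 : 0 ≤ θ) (hθ1 : θ ≤ 1) {d : ℕ} {E : Fin d → Finset ℕ+}
    (hE : TsAdmissible S E) (x : ℕ+ →₀ ℝ) :
    θ * ∑ i, tnorm θ S (tsProj (E i) x) ≤ tnorm θ S x :=
  le_of_tendsto'
    ((tendsto_finsetSum _ fun _ _ => tendsto_tnormAux hθ0 hθ1 _).const_mul θ)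
    fun m => (le_tnormAux_succ hθ0 hθ1 hE m x).trans (tnormAux_le_tnorm hθ0 hθ1 _ x)

lemma tsAdmissible_singleton (hS : ∀ a : ℕ+, {a} ∈ S) {E : Finset ℕ+}
    (hE : E.Nonempty) : TsAdmissible S fun _ : Fin 1 => E := by
  refine ⟨fun _ => hE, fun i j hij => absurd hij (Subsingleton.elim i j ▸ lt_irrefl i),
    fun _ => E.min' hE, fun _ => ⟨E.min'_mem hE, fun b hb => E.min'_le b hb⟩, ?_⟩
  simpa using hS (E.min' hE)

lemma TsAdmissible.eq_one_of_one_mem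
    (hS : ∀ G ∈ S, (1 : ℕ+) ∈ G → G = {1}) {d : ℕ} {E : Fin d → Finset ℕ+}
    (hE : TsAdmissible S E) {i₀ : Fin d} (h1 : (1 : ℕ+) ∈ E i₀) : d = 1 := by
  obtain ⟨-, hlt, μ, hμ, hμS⟩ := hE
  have hμ1 : Finset.univ.image μ = {1} :=
    hS _ hμS (Finset.mem_image.mpr ⟨i₀, Finset.mem_univ _, le_antisymm ((hμ i₀).2 h1) one_le⟩)
  have hall : ∀ i, (1 : ℕ+) ∈ E i := fun i => by
    have hi : μ i ∈ Finset.univ.image μ := Finset.mem_image_of_mem μ (Finset.mem_univ i)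
    rw [hμ1, Finset.mem_singleton] at hi
    exact hi ▸ (hμ i).1
  have hd0 := i₀.pos
  by_contra hd
  have h01 : (⟨0, by omega⟩ : Fin d) < ⟨1, by omega⟩ := Fin.mk_lt_mk.mpr one_pos
  exact lt_irrefl _ (hlt _ _ h01 1 (hall _) 1 (hall _))

lemma tsAdmissible_cons_singletons {k : ℕ} {E₀ : Finset ℕ+} {a : ℕ+} {f : Fin k → ℕ+}
    (ha : IsLeast (E₀ : Set ℕ+) a) (hf : StrictMono f) (hE₀f : ∀ b ∈ E₀, ∀ i, b < f i)
    (hS : insert a (Finset.univ.image f) ∈ S) :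
    TsAdmissible S (Fin.cons E₀ fun i => {f i} : Fin (k + 1) → Finset ℕ+) := by
  refine ⟨Fin.cases ⟨a, ha.1⟩ fun i => Finset.singleton_nonempty _, ?_, Fin.cons a f,
    Fin.cases (by simpa using ha) fun i => by simp [isLeast_singleton], ?_⟩
  · intro i j hij
    induction j using Fin.cases with
    | zero => exact absurd hij (Fin.not_lt_zero i)
    | succ j =>
      induction i using Fin.cases with
      | zero => simpa using fun b hb => hE₀f b hb j
      | succ i => simpa using hf (Fin.succ_lt_succ_iff.mp hij)
  · convert hS using 1
    ext b
    simp [Fin.exists_fin_succ, eq_comm]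

lemma le_tnorm_of_cons_singletons (hθ0 : 0 ≤ θ) (hθ1 : θ ≤ 1) {k : ℕ} {E₀ : Finset ℕ+}
    {f : Fin k → ℕ+} (hE : TsAdmissible S (Fin.cons E₀ fun i => {f i} : Fin (k + 1) → Finset ℕ+))
    (z : ℕ+ →₀ ℝ) :
    θ * (tnorm θ S (tsProj E₀ z) + ∑ i, |z (f i)|) ≤ tnorm θ S z := by
  refine le_trans (mul_le_mul_of_nonneg_left ?_ hθ0) (le_tnorm_of_tsAdmissible hθ0 hθ1 hE z)
  rw [Fin.sum_univ_succ]
  refine add_le_add (by simp) (Finset.sum_le_sum fun i _ => ?_)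
  simpa [tsProj_apply] using abs_le_tnorm (S := S) hθ0 hθ1 (tsProj {f i} z) (f i)

lemma tnormAux_le_max_abs_erase_one (hθ0 : 0 ≤ θ) (hθ1 : θ ≤ 1)
    (hS : ∀ G ∈ S, (1 : ℕ+) ∈ G → G = {1}) (m : ℕ) (x : ℕ+ →₀ ℝ) :
    tnormAux θ S m x ≤ max |x 1| (tnormAux θ S m (x.erase 1)) := by
  induction m generalizing x with
  | zero =>
    refine tnormAux_zero_le fun i => ?_
    by_cases h1 : i = 1
    · exact h1 ▸ le_max_left _ _
    · simpa [Finsupp.erase_apply, h1] using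
        le_max_of_le_right (abs_le_tnormAux_zero (θ := θ) (S := S) (x.erase 1) i)
  | succ m ih =>
    refine tnormAux_succ_le ((ih x).trans (max_le_max le_rfl (tnormAux_mono _ m.le_succ)))
      (le_max_of_le_left (abs_nonneg _)) fun d E hE => ?_
    by_cases hc : ∃ i, (1 : ℕ+) ∈ E i
    · obtain ⟨i₀, h1⟩ := hc
      obtain rfl := hE.eq_one_of_one_mem hS h1
      have hsucc := le_tnormAux_succ hθ0 hθ1 hE m (x.erase 1)
      rw [Fin.sum_univ_one, tsProj_erase_one] at hsucc
      rw [Fin.sum_univ_one]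
      have hx1 : |tsProj (E 0) x 1| ≤ |x 1| := by
        rw [tsProj_apply]; split_ifs <;> simp
      calc θ * tnormAux θ S m (tsProj (E 0) x)
          ≤ θ * max |tsProj (E 0) x 1| (tnormAux θ S m ((tsProj (E 0) x).erase 1)) :=
            mul_le_mul_of_nonneg_left (ih _) hθ0
        _ = max (θ * |tsProj (E 0) x 1|) (θ * tnormAux θ S m ((tsProj (E 0) x).erase 1)) :=
            mul_max_of_nonneg _ _ hθ0
        _ ≤ max |x 1| (tnormAux θ S (m + 1) (x.erase 1)) :=
            max_le_max ((mul_le_of_le_one_left (abs_nonneg _) hθ1).trans hx1) hsucc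
    · simp only [not_exists] at hc
      refine le_max_of_le_right ?_
      simpa only [tsProj_erase_one_of_notMem (hc _)] using
        le_tnormAux_succ hθ0 hθ1 hE m (x.erase 1)

lemma tnormAux_erase_one_le (hθ0 : 0 ≤ θ) (hθ1 : θ ≤ 1)
    (hS : ∀ G ∈ S, (1 : ℕ+) ∈ G → G = {1}) (hSsing : ∀ a : ℕ+, {a} ∈ S)
    (m : ℕ) (x : ℕ+ →₀ ℝ) :
    tnormAux θ S m (x.erase 1) ≤ tnormAux θ S m x := by
  induction m with
  | zero =>
    refine tnormAux_zero_le fun i => ?_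
    rw [Finsupp.erase_apply]
    split_ifs
    · rw [abs_zero]
      exact (abs_nonneg _).trans (abs_le_tnormAux_zero x 1)
    · exact abs_le_tnormAux_zero x i
  | succ m ih =>
    refine tnormAux_succ_le (ih.trans (tnormAux_mono _ m.le_succ)) (tnormAux_nonneg _ x)
      fun d E hE => ?_
    by_cases hc : ∃ i, (1 : ℕ+) ∈ E i
    · obtain ⟨i₀, h1⟩ := hc
      obtain rfl := hE.eq_one_of_one_mem hS h1
      rw [Fin.sum_univ_one, tsProj_erase_one_eq_tsProj_erase]
      rcases ((E 0).erase 1).eq_empty_or_nonempty with hE0 | hE0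
      · have h0 : tnormAux θ S m (tsProj ∅ x) ≤ 0 := by
          simpa [l1Norm, tsProj] using tnormAux_le_l1Norm (S := S) hθ0 hθ1 m (tsProj ∅ x)
        rw [hE0]
        exact (mul_nonpos_of_nonneg_of_nonpos hθ0 h0).trans (tnormAux_nonneg _ x)
      · simpa using le_tnormAux_succ hθ0 hθ1 (tsAdmissible_singleton hSsing hE0) m x
    · simp only [not_exists] at hc
      simpa only [tsProj_erase_one_of_notMem (hc _)] using le_tnormAux_succ hθ0 hθ1 hE m x

lemma tnorm_le_max_abs_erase_one (hθ0 : 0 ≤ θ) (hθ1 : θ ≤ 1)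
    (hS : ∀ G ∈ S, (1 : ℕ+) ∈ G → G = {1}) (x : ℕ+ →₀ ℝ) :
    tnorm θ S x ≤ max |x 1| (tnorm θ S (x.erase 1)) :=
  tnorm_le fun m => (tnormAux_le_max_abs_erase_one hθ0 hθ1 hS m x).trans
    (max_le_max le_rfl (tnormAux_le_tnorm hθ0 hθ1 m _))

lemma tnorm_erase_one_le (hθ0 : 0 ≤ θ) (hθ1 : θ ≤ 1)
    (hS : ∀ G ∈ S, (1 : ℕ+) ∈ G → G = {1}) (hSsing : ∀ a : ℕ+, {a} ∈ S) (x : ℕ+ →₀ ℝ) :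
    tnorm θ S (x.erase 1) ≤ tnorm θ S x :=
  tnorm_le fun m => (tnormAux_erase_one_le hθ0 hθ1 hS hSsing m x).trans
    (tnormAux_le_tnorm hθ0 hθ1 m _)

lemma tnorm_single_one_add_le (hθ0 : 0 ≤ θ) (hθ1 : θ ≤ 1)
    (hS : ∀ G ∈ S, (1 : ℕ+) ∈ G → G = {1}) (hSsing : ∀ a : ℕ+, {a} ∈ S)
    {v : ℕ+ →₀ ℝ} (hv : v 1 ≤ 0) :
    tnorm θ S (Finsupp.single 1 1 + v) ≤ max 1 (tnorm θ S v) := by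
  have hv1 := neg_le_of_abs_le (abs_le_tnorm (S := S) hθ0 hθ1 v 1)
  refine (tnorm_le_max_abs_erase_one hθ0 hθ1 hS _).trans (max_le ?_ ?_)
  · rw [Finsupp.add_apply, Finsupp.single_eq_same, abs_le]
    constructor <;> linarith [le_max_left 1 (tnorm θ S v), le_max_right 1 (tnorm θ S v)]
  · rw [Finsupp.erase_add, Finsupp.erase_single, zero_add]
    exact (tnorm_erase_one_le hθ0 hθ1 hS hSsing v).trans (le_max_right _ _)

end TsirelsonNorm

lemma mem_schreier_add_two_of_mem_schreier_succ {m : ℕ} {F : Finset ℕ+}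
    (hF : F ∈ Schreier (m + 1)) (hne : F.Nonempty) : F ∈ Schreier (m + 2) :=
  Or.inr ⟨1, fun _ => F, one_pos, fun _ => hF, fun _ => hne,
    fun i j hij => absurd hij (Subsingleton.elim i j ▸ lt_irrefl i), fun _ b _ => b.pos,
    by simp⟩

lemma mem_schreier_succ_of_mem_schreier_one {F : Finset ℕ+} (hF : F ∈ Schreier 1)
    (hne : F.Nonempty) (m : ℕ) : F ∈ Schreier (m + 1) := by
  induction m with
  | zero => exact hF
  | succ m ih => exact mem_schreier_add_two_of_mem_schreier_succ ih hne

lemma singleton_mem_schreier (n : ℕ) (a : ℕ+) : {a} ∈ Schreier n := by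
  cases n with
  | zero => simp [Schreier]
  | succ n =>
    refine mem_schreier_succ_of_mem_schreier_one (fun b _ => ?_) (Finset.singleton_nonempty a) n
    exact (Finset.card_singleton a).trans_le b.pos

lemma insert_mem_schreier_add_two {m : ℕ} {a : ℕ+} (ha : 2 ≤ (a : ℕ)) {F : Finset ℕ+}
    (hF : F ∈ Schreier (m + 1)) (hne : F.Nonempty) (hlt : ∀ b ∈ F, a < b) :
    insert a F ∈ Schreier (m + 2) := by
  refine Or.inr ⟨2, ![{a}, F], two_pos, ?_, ?_, ?_, ?_, ?_⟩
  · simpa [Fin.forall_fin_two] using ⟨singleton_mem_schreier _ a, hF⟩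
  · simpa [Fin.forall_fin_two] using hne
  · simp only [Fin.forall_fin_two]
    simpa using hlt
  · simp only [Fin.forall_fin_two]
    refine ⟨by simpa using ha, fun b hb => ?_⟩
    have : (a : ℕ) < b := hlt b hb
    simp only [Matrix.cons_val_one, Matrix.cons_val_zero] at hb ⊢
    omega
  · ext b
    simp [Fin.exists_fin_two]

lemma eq_singleton_one_of_mem_schreier {n : ℕ} {G : Finset ℕ+} (hG : G ∈ Schreier (n + 1))
    (h1 : (1 : ℕ+) ∈ G) : G = {1} := by
  induction n generalizing G with
  | zero =>
    exact Finset.eq_singleton_iff_unique_mem.mpr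
      ⟨h1, fun b hb => Finset.card_le_one.mp (by simpa using hG 1 h1) b hb 1 h1⟩
  | succ n ih =>
    rcases hG with rfl | ⟨d, G, hd, hG, -, -, hge, rfl⟩
    · simp at h1
    · obtain ⟨i₀, -, hi₀⟩ := Finset.mem_biUnion.mp h1
      obtain rfl : d = 1 := le_antisymm (by simpa using hge i₀ 1 hi₀) hd
      rw [Finset.univ_unique, Finset.singleton_biUnion] at h1 ⊢
      exact ih (hG _) h1

section SchreierTwo

variable {θ : ℝ} {n : ℕ}

lemma le_tnorm_schreier_of_block (hθ0 : 0 ≤ θ) (hθ1 : θ ≤ 1) {k M : ℕ} (hk : 0 < k)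
    (hkM : k ≤ M + 3) (z : ℕ+ →₀ ℝ) :
    θ * (tnorm θ (Schreier (n + 2)) (tsProj (Finset.Icc 2 (M + 1).succPNat) z) +
      ∑ i : Fin k, |z (M + 2 + i).succPNat|) ≤ tnorm θ (Schreier (n + 2)) z := by
  set F := Finset.univ.image fun i : Fin k => (M + 2 + i).succPNat
  have hF : ∀ b ∈ F, M + 3 ≤ (b : ℕ) := by
    simp only [F, Finset.mem_image, Finset.mem_univ, true_and]
    rintro _ ⟨i, rfl⟩
    rw [Nat.succPNat_coe]
    omega
  have hFne : F.Nonempty := ⟨_, Finset.mem_image_of_mem _ (Finset.mem_univ ⟨0, hk⟩)⟩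
  have hF1 : F ∈ Schreier 1 := fun b hb =>
    (Finset.card_image_le.trans_eq (Finset.card_fin k)).trans (hkM.trans (hF b hb))
  refine le_tnorm_of_cons_singletons hθ0 hθ1
    (tsAdmissible_cons_singletons (a := 2) ?_ ?_ ?_
      (insert_mem_schreier_add_two le_rfl (mem_schreier_succ_of_mem_schreier_one hF1 hFne n)
        hFne fun b hb => ?_)) z
  · rw [Finset.coe_Icc]
    exact isLeast_Icc (PNat.coe_le_coe _ _ |>.mp (by simp))
  · intro i j hij
    rw [← PNat.coe_lt_coe, Nat.succPNat_coe, Nat.succPNat_coe]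
    have : (i : ℕ) < j := hij
    omega
  · intro b hb i
    have : (b : ℕ) ≤ M + 2 := by simpa [← PNat.coe_le_coe] using (Finset.mem_Icc.mp hb).2
    rw [← PNat.coe_lt_coe, Nat.succPNat_coe]
    omega
  · rw [← PNat.coe_lt_coe, PNat.val_ofNat]
    linarith [hF b hb]

lemma one_add_le_tnorm_of_block (hθ0 : 0 ≤ θ) (hθ1 : θ ≤ 1) {k M : ℕ} (hk : 0 < k)
    (hkM : k ≤ M + 3) {c : ℝ} (hkc : θ * (k * c) = 1) (z : ℕ+ →₀ ℝ)
    (hz : ∀ i : Fin k, |z (M + 2 + i).succPNat| = c) :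
    1 + θ * tnorm θ (Schreier (n + 2)) (tsProj (Finset.Icc 2 (M + 1).succPNat) z) ≤
      tnorm θ (Schreier (n + 2)) z := by
  have h := le_tnorm_schreier_of_block (n := n) hθ0 hθ1 hk hkM z
  rw [Finset.sum_congr rfl fun i _ => hz i, Finset.sum_const, Finset.card_univ,
    Fintype.card_fin, nsmul_eq_mul, mul_add, hkc] at h
  linarith

theorem exists_tnorm_eq_one_le_tnorm_add_sub (hθ0 : 0 < θ) (hθ1 : θ ≤ 1) (v : ℕ+ →₀ ℝ) :
    ∃ y, tnorm θ (Schreier (n + 2)) y = 1 ∧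
      1 + θ * tnorm θ (Schreier (n + 2)) (v.erase 1) ≤ tnorm θ (Schreier (n + 2)) (v + y) ∧
      1 + θ * tnorm θ (Schreier (n + 2)) (v.erase 1) ≤ tnorm θ (Schreier (n + 2)) (v - y) := by
  set k := ⌈θ⁻¹⌉₊
  have hk : 0 < k := Nat.ceil_pos.mpr (inv_pos.mpr hθ0)
  have hθk : 1 ≤ θ * k := by simpa [← div_le_iff₀' hθ0] using Nat.le_ceil θ⁻¹
  set c := (θ * k)⁻¹
  have hc0 : 0 < c := by positivity
  have hkc : θ * (k * c) = 1 := by rw [← mul_assoc, mul_inv_cancel₀ (by positivity)]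
  set M := k + v.support.sup fun a => (a : ℕ)
  set E₀ := Finset.Icc 2 (M + 1).succPNat
  set f : Fin k → ℕ+ := fun i => (M + 2 + i).succPNat
  set y : ℕ+ →₀ ℝ := Finsupp.indicator (Finset.univ.image f) fun _ _ => c
  have hvM : ∀ a ∈ v.support, (a : ℕ) ≤ M := fun a ha =>
    (Finset.le_sup (f := fun a : ℕ+ => (a : ℕ)) ha).trans (Nat.le_add_left _ _)
  have hvf : ∀ i, v (f i) = 0 := fun i => Finsupp.notMem_support_iff.mp fun h => by
    have := hvM _ h
    simp only [f, Nat.succPNat_coe] at this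
    omega
  have hyf : ∀ i, |y (f i)| = c := fun i => by
    simp [y, Finsupp.indicator_apply, abs_of_pos hc0]
  have hvE₀ : tsProj E₀ v = v.erase 1 := tsProj_Icc_two_eq_erase_one fun a ha => by
    rw [← PNat.coe_le_coe, Nat.succPNat_coe]
    linarith [hvM a ha]
  have hyE₀ : tsProj E₀ y = 0 := tsProj_eq_zero fun a ha => by
    refine Finsupp.notMem_support_iff.mp fun hya => ?_
    obtain ⟨i, -, rfl⟩ := Finset.mem_image.mp
      (Finsupp.support_indicator_subset (s := Finset.univ.image f) (f := fun _ _ => c) hya)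
    have := (PNat.coe_le_coe _ _).mpr (Finset.mem_Icc.mp ha).2
    simp only [f, Nat.succPNat_coe] at this
    omega
  have hlow := one_add_le_tnorm_of_block (n := n) hθ0.le hθ1 hk (by omega) hkc (M := M)
  refine ⟨y, le_antisymm ?_ ?_, ?_, ?_⟩
  · refine (tnorm_indicator_const_le hθ0.le hθ1 hc0.le).trans (max_le ?_ ?_)
    · exact inv_le_one_of_one_le₀ hθk
    · rw [← hkc]
      gcongr
      exact_mod_cast Finset.card_image_le.trans_eq (Finset.card_fin k)
  · have := hlow y hyf
    rw [hyE₀] at this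
    linarith [mul_nonneg hθ0.le (tnorm_nonneg hθ0.le hθ1 (S := Schreier (n + 2)) 0)]
  · refine (hlow (v + y) fun i => ?_).trans_eq' (by rw [tsProj_add, hvE₀, hyE₀, add_zero])
    rw [Finsupp.add_apply, hvf, zero_add, hyf]
  · refine (hlow (v - y) fun i => ?_).trans_eq' (by rw [tsProj_sub, hvE₀, hyE₀, sub_zero])
    rw [Finsupp.sub_apply, hvf, zero_sub, abs_neg, hyf]

end SchreierTwo

lemma eq_or_eq_neg_of_mem_span_singleton {E : Type*} [NormedAddCommGroup E] [NormedSpace ℝ E]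
    {u v : E} (hv : ‖v‖ = 1) (hu : ‖u‖ = 1) (h : u ∈ Submodule.span ℝ {v}) : u = v ∨ u = -v := by
  obtain ⟨c, rfl⟩ := Submodule.mem_span_singleton.mp h
  rw [norm_smul, hv, mul_one, Real.norm_eq_abs] at hu
  rcases (abs_eq zero_le_one).mp hu with rfl | rfl <;> simp

namespace IsTsirelsonSpace

variable {θ : ℝ} {n : ℕ} {X : Type*} [NormedAddCommGroup X] [NormedSpace ℝ X] {e : ℕ+ → X}

lemma norm_linearCombination (hX : IsTsirelsonSpace θ n X e) (a : ℕ+ →₀ ℝ) :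
    ‖Finsupp.linearCombination ℝ e a‖ = tnorm θ (Schreier n) a := by
  rw [Finsupp.linearCombination_apply]
  exact hX.norm_embed a

lemma denseRange_linearCombination (hX : IsTsirelsonSpace θ n X e) :
    DenseRange (Finsupp.linearCombination ℝ e) := by
  convert hX.dense_embed using 1
  ext a
  exact Finsupp.linearCombination_apply ℝ a

lemma norm_e_one (hX : IsTsirelsonSpace θ n X e) (hθ0 : 0 ≤ θ) (hθ1 : θ ≤ 1) : ‖e 1‖ = 1 := by
  simpa using (hX.norm_linearCombination (Finsupp.single 1 1)).trans (tnorm_single_one hθ0 hθ1)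

lemma min_norm_add_sub_le_max (hX : IsTsirelsonSpace θ (n + 1) X e) (hθ0 : 0 ≤ θ)
    (hθ1 : θ ≤ 1) (y : X) : min ‖e 1 + y‖ ‖e 1 - y‖ ≤ max 1 ‖y‖ := by
  have hsplit {v : ℕ+ →₀ ℝ} (hv : v 1 ≤ 0) :
      ‖e 1 + Finsupp.linearCombination ℝ e v‖ ≤ max 1 ‖Finsupp.linearCombination ℝ e v‖ := by
    rw [← one_smul ℝ (e 1), ← Finsupp.linearCombination_single, ← map_add,
      hX.norm_linearCombination, hX.norm_linearCombination]
    exact tnorm_single_one_add_le hθ0 hθ1 (fun G => eq_singleton_one_of_mem_schreier)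
      (singleton_mem_schreier _) hv
  refine hX.denseRange_linearCombination.induction_on y
    (isClosed_le (by fun_prop) (by fun_prop)) fun v => ?_
  rcases le_total (v 1) 0 with hv | hv
  · exact (min_le_left _ _).trans (hsplit hv)
  · refine (min_le_right _ _).trans ?_
    simpa [sub_eq_add_neg] using hsplit (v := -v) (by simpa using hv)

lemma exists_norm_add_sub_gt (hX : IsTsirelsonSpace θ (n + 2) X e) (hθ0 : 0 < θ)
    (hθ1 : θ ≤ 1) (x : X) {ε : ℝ} (hε : 0 < ε) :
    ∃ y : X, ‖y‖ = 1 ∧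
      1 + θ * Metric.infDist x (Submodule.span ℝ {e 1}) - ε < ‖x + y‖ ∧
      1 + θ * Metric.infDist x (Submodule.span ℝ {e 1}) - ε < ‖x - y‖ := by
  set Φ := Finsupp.linearCombination ℝ e
  set K := Submodule.span ℝ {e 1}
  obtain ⟨v, hv⟩ := Metric.denseRange_iff.mp hX.denseRange_linearCombination x (ε / 2)
    (half_pos hε)
  obtain ⟨y, hy1, hplus, hminus⟩ := exists_tnorm_eq_one_le_tnorm_add_sub (n := n) hθ0 hθ1 v
  have htail : Metric.infDist x K - ε / 2 ≤ tnorm θ (Schreier (n + 2)) (v.erase 1) := by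
    have hΦ : Φ (v.erase 1) = Φ v - v 1 • e 1 := by
      rw [eq_sub_iff_add_eq', ← Finsupp.linearCombination_single, ← map_add,
        Finsupp.single_add_erase]
    have hmem : v 1 • e 1 ∈ K := K.smul_mem _ (Submodule.mem_span_singleton_self _)
    rw [← hX.norm_linearCombination, hΦ, ← dist_eq_norm]
    linarith [Metric.infDist_le_infDist_add_dist (x := x) (y := Φ v) (s := K),
      Metric.infDist_le_dist_of_mem (x := Φ v) hmem]
  have hlarge {z : ℕ+ →₀ ℝ} {w : X}
      (hz : 1 + θ * tnorm θ (Schreier (n + 2)) (v.erase 1) ≤ tnorm θ (Schreier (n + 2)) z)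
      (hw : w = Φ z + (x - Φ v)) : 1 + θ * Metric.infDist x K - ε < ‖w‖ := by
    have h1 : ‖Φ z‖ ≤ ‖w‖ + dist x (Φ v) := by
      simpa [hw, dist_eq_norm] using norm_sub_le w (x - Φ v)
    rw [hX.norm_linearCombination] at h1
    linarith [mul_le_of_le_one_left (half_pos hε).le hθ1, mul_le_mul_of_nonneg_left htail hθ0.le]
  refine ⟨Φ y, by rw [hX.norm_linearCombination, hy1], hlarge hplus ?_, hlarge hminus ?_⟩
  · rw [map_add]; abel
  · rw [map_sub]; abel

end IsTsirelsonSpace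

/-- For `n ≥ 2` and `u` in the unit sphere of `T[θ, S_n]`:
`min(‖u + y‖, ‖u − y‖) ≤ 1` for all `y` in the unit sphere iff `u = ± e₁`. -/
theorem tsirelson_min_norm_le_one_char_Sn
    (θ : ℝ) (hθ0 : 0 < θ) (hθ : θ ≤ 1 / 2) (n : ℕ) (hn : 2 ≤ n)
    (X : Type*) [NormedAddCommGroup X] [NormedSpace ℝ X] (e : ℕ+ → X)
    (hX : IsTsirelsonSpace θ n X e)
    (u : X) (hu : ‖u‖ = 1) :
    (∀ y : X, ‖y‖ = 1 → min ‖u + y‖ ‖u - y‖ ≤ 1) ↔ (u = e 1 ∨ u = -e 1) := by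
  obtain ⟨n, rfl⟩ : ∃ m, n = m + 2 := ⟨n - 2, by omega⟩
  have hθ1 : θ ≤ 1 := by linarith
  constructor
  · intro hmin
    refine eq_or_eq_neg_of_mem_span_singleton (hX.norm_e_one hθ0.le hθ1) hu ?_
    by_contra hu_not
    have hδ : 0 < Metric.infDist u (Submodule.span ℝ {e 1}) :=
      ((Submodule.span ℝ {e 1}).closed_of_finiteDimensional.notMem_iff_infDist_pos
        ⟨0, Submodule.zero_mem _⟩).mp hu_not
    obtain ⟨y, hy, hplus, hminus⟩ := hX.exists_norm_add_sub_gt hθ0 hθ1 u (mul_pos hθ0 hδ)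
    linarith [hmin y hy, lt_min hplus hminus]
  · rintro (rfl | rfl) y hy
    · simpa [hy] using hX.min_norm_add_sub_le_max hθ0.le hθ1 y
    · rw [show -e 1 + y = -(e 1 - y) by abel, show -e 1 - y = -(e 1 + y) by abel, norm_neg,
        norm_neg, min_comm]
      simpa [hy] using hX.min_norm_add_sub_le_max hθ0.le hθ1 y
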